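/- For finitely generated groups G and H, corank(G ∗ H) = corank(G) + corank(H), where G ∗ H denotes the free product. -/

import Mathlib

open scoped Monoid.Coprod

/-- The corank of a group `G`: the largest `r` such that there exists an epimorphism
from `G` onto the free group of rank `r`. -/
noncomputable def corank (G : Type*) [Group G] : ℕ :=
  sSup {r : ℕ | ∃ f : G →* FreeGroup (Fin r), Function.Surjective f}

/-!
Maps `G → F_a`, `H → F_b` onto free groups combine to a map `G ∗ H → F_a ∗ F_b ≅ F_{a+b}` onto a
free group. Conversely, given `ψ : G ∗ H ↠ F_r`, the images `ψ(G)` and `ψ(H)` are finitely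
generated subgroups of `F_r`, hence free (Nielsen–Schreier) of ranks `a ≤ corank G` and
`b ≤ corank H`; together they generate `F_r`, so `F_{a+b} ↠ F_r`, and abelianizing shows
`r ≤ a + b`.
-/

open Function

universe u v

theorem Abelianization.map_surjective {G H : Type*} [Group G] [Group H] {f : G →* H}
    (hf : Surjective f) : Surjective (Abelianization.map f) := by
  intro y
  obtain ⟨y, rfl⟩ := QuotientGroup.mk_surjective y
  obtain ⟨x, rfl⟩ := hf y
  exact ⟨Abelianization.of x, Abelianization.map_of f x⟩

namespace FreeGroup

theorem lift_mk_le_lift_mk_of_surjective {α : Type u} {β : Type v}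
    (f : FreeGroup α →* FreeGroup β) (hf : Surjective f) :
    Cardinal.lift.{u} (Cardinal.mk β) ≤ Cardinal.lift.{v} (Cardinal.mk α) := by
  -- `FreeAbelianGroup α` is by definition the abelianization of `FreeGroup α`, with basis `α`.
  let F : FreeAbelianGroup α →ₗ[ℤ] FreeAbelianGroup β :=
    (MonoidHom.toAdditive (Abelianization.map f)).toIntLinearMap
  have := F.lift_rank_le_of_surjective (Abelianization.map_surjective hf)
  rwa [← (FreeAbelianGroup.basis α).mk_eq_rank'', ← (FreeAbelianGroup.basis β).mk_eq_rank''] at this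

theorem natCard_le_of_surjective {α β : Type*} [Finite α] (f : FreeGroup α →* FreeGroup β)
    (hf : Surjective f) : Nat.card β ≤ Nat.card α := by
  simpa only [Cardinal.toNat_lift, ← Nat.card.eq_def] using Cardinal.toNat_le_toNat
    (lift_mk_le_lift_mk_of_surjective f hf) (Cardinal.lift_lt_aleph0.2 Cardinal.mk_lt_aleph0)

def sumMulEquivCoprod (α β : Type*) : FreeGroup (α ⊕ β) ≃* FreeGroup α ∗ FreeGroup β :=
  MonoidHom.toMulEquiv
    (FreeGroup.lift (Sum.elim (Monoid.Coprod.inl ∘ of) (Monoid.Coprod.inr ∘ of)))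
    (Monoid.Coprod.lift (FreeGroup.map Sum.inl) (FreeGroup.map Sum.inr))
    (by ext (a | b) <;> rfl)
    (by ext a <;> rfl)

theorem le_add_of_surjective_coprod {a b r : ℕ}
    (f : FreeGroup (Fin a) ∗ FreeGroup (Fin b) →* FreeGroup (Fin r)) (hf : Surjective f) :
    r ≤ a + b := by
  simpa using natCard_le_of_surjective (f.comp (sumMulEquivCoprod (Fin a) (Fin b)).toMonoidHom)
    (hf.comp (sumMulEquivCoprod _ _).surjective)

end FreeGroup

theorem IsFreeGroup.exists_mulEquiv_freeGroup_fin (G : Type*) [Group G] [IsFreeGroup G]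
    [Group.FG G] : ∃ n : ℕ, Nonempty (G ≃* FreeGroup (Fin n)) := by
  obtain ⟨α, _, φ, hφ⟩ := Group.fg_iff_exists_freeGroup_hom_surjective_finite.1 ‹Group.FG G›
  have : Finite (Generators G) := by
    rw [← Cardinal.lt_aleph0_iff_finite, ← Cardinal.lift_lt_aleph0]
    exact (FreeGroup.lift_mk_le_lift_mk_of_surjective ((toFreeGroup G).toMonoidHom.comp φ)
      ((toFreeGroup G).surjective.comp hφ)).trans_lt
      (Cardinal.lift_lt_aleph0.2 Cardinal.mk_lt_aleph0)
  exact ⟨Nat.card (Generators G),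
    ⟨(toFreeGroup G).trans (FreeGroup.freeGroupCongr (Finite.equivFin _))⟩⟩

namespace Monoid.Coprod

theorem map_surjective {M N M' N' : Type*} [Monoid M] [Monoid N] [Monoid M'] [Monoid N']
    {f : M →* M'} {g : N →* N'} (hf : Surjective f) (hg : Surjective g) :
    Surjective (map f g) := by
  rw [← MonoidHom.mrange_eq_top, mrange_eq, map_comp_inl, map_comp_inr, MonoidHom.mrange_comp,
    MonoidHom.mrange_comp, MonoidHom.mrange_eq_top.2 hf, MonoidHom.mrange_eq_top.2 hg,
    ← MonoidHom.mrange_eq_map, ← MonoidHom.mrange_eq_map, mrange_inl_sup_mrange_inr]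

instance fg {G H : Type*} [Group G] [Group H] [Group.FG G] [Group.FG H] : Group.FG (G ∗ H) := by
  obtain ⟨α, _, φ, hφ⟩ := Group.fg_iff_exists_freeGroup_hom_surjective_finite.1 ‹Group.FG G›
  obtain ⟨β, _, ψ, hψ⟩ := Group.fg_iff_exists_freeGroup_hom_surjective_finite.1 ‹Group.FG H›
  exact Group.fg_of_surjective (f := (map φ ψ).comp (FreeGroup.sumMulEquivCoprod α β).toMonoidHom)
    ((map_surjective hφ hψ).comp (FreeGroup.sumMulEquivCoprod α β).surjective)

end Monoid.Coprod

section Corank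

variable {G H : Type*} [Group G] [Group H] [Group.FG G] [Group.FG H]

theorem bddAbove_corank_set :
    BddAbove {r : ℕ | ∃ f : G →* FreeGroup (Fin r), Surjective f} := by
  obtain ⟨α, _, φ, hφ⟩ := Group.fg_iff_exists_freeGroup_hom_surjective_finite.1 ‹Group.FG G›
  refine ⟨Nat.card α, fun r ⟨f, hf⟩ => ?_⟩
  simpa using FreeGroup.natCard_le_of_surjective (f.comp φ) (hf.comp hφ)

theorem le_corank {r : ℕ} {f : G →* FreeGroup (Fin r)} (hf : Surjective f) : r ≤ corank G :=
  le_csSup bddAbove_corank_set ⟨f, hf⟩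

theorem exists_surjective_freeGroup_corank :
    ∃ f : G →* FreeGroup (Fin (corank G)), Surjective f := by
  refine Nat.sSup_mem ?_ bddAbove_corank_set
  exact ⟨0, 1, fun _ => ⟨1, Subsingleton.elim _ _⟩⟩

theorem exists_le_corank_range_eq {α : Type*} (ψ : G →* FreeGroup α) :
    ∃ a ≤ corank G, ∃ q : FreeGroup (Fin a) →* FreeGroup α, q.range = ψ.range := by
  obtain ⟨a, ⟨e⟩⟩ := IsFreeGroup.exists_mulEquiv_freeGroup_fin ψ.range
  refine ⟨a, le_corank (f := e.toMonoidHom.comp ψ.rangeRestrict)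
    (e.surjective.comp ψ.rangeRestrict_surjective), ψ.range.subtype.comp e.symm.toMonoidHom, ?_⟩
  simp [MonoidHom.range_comp, ← MonoidHom.range_eq_map]

theorem add_corank_le_corank_coprod : corank G + corank H ≤ corank (G ∗ H) := by
  obtain ⟨f, hf⟩ := exists_surjective_freeGroup_corank (G := G)
  obtain ⟨g, hg⟩ := exists_surjective_freeGroup_corank (G := H)
  let e := (FreeGroup.sumMulEquivCoprod (Fin (corank G)) (Fin (corank H))).symm.trans
    (FreeGroup.freeGroupCongr finSumFinEquiv)
  exact le_corank (f := e.toMonoidHom.comp (Monoid.Coprod.map f g))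
    (e.surjective.comp (Monoid.Coprod.map_surjective hf hg))

theorem corank_coprod_le : corank (G ∗ H) ≤ corank G + corank H := by
  obtain ⟨ψ, hψ⟩ := exists_surjective_freeGroup_corank (G := G ∗ H)
  obtain ⟨a, ha, qG, hqG⟩ := exists_le_corank_range_eq (ψ.comp Monoid.Coprod.inl)
  obtain ⟨b, hb, qH, hqH⟩ := exists_le_corank_range_eq (ψ.comp Monoid.Coprod.inr)
  have hq : Surjective (Monoid.Coprod.lift qG qH) := by
    rw [← MonoidHom.range_eq_top, Monoid.Coprod.range_lift, hqG, hqH, ← Monoid.Coprod.range_eq,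
      MonoidHom.range_eq_top.2 hψ]
  exact (FreeGroup.le_add_of_surjective_coprod _ hq).trans (add_le_add ha hb)

end Corank

/-- For finitely generated groups `G` and `H`,
`corank(G ∗ H) = corank(G) + corank(H)`, where `G ∗ H` is the free product. -/
theorem corank_coprod (G H : Type*) [Group G] [Group H] [Group.FG G] [Group.FG H] :
    corank (Monoid.Coprod G H) = corank G + corank H :=
  le_antisymm corank_coprod_le add_corank_le_corank_coprod
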